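/- Let G be a finitely generated subgroup of ℝ^n with G ∩ ℤ^n = {0}. Then for any finite subset F ⊂ G, any ε > 0, and any full rank sublattice Γ ⊂ ℤ^n, one has F^{*,ε} + Γ = ℝ^n, i.e., every point of ℝ^n is the sum of an element of the ε-approximate dual of F and an element of Γ. -/

import Mathlib

/-!
Put `L x = (⟪g, x⟫)_{g ∈ F} ∈ ℝ^F`; the claim is that `L x` lies in the closure `H` of the subgroup
`ℤ^F + L Γ`. A closed subgroup of a Euclidean space is a subspace plus a lattice orthogonal to it,
hence equals its double dual `{x | ⟪ξ, x⟫ ∈ ℤ whenever ⟪ξ, H⟫ ⊆ ℤ}`. If `⟪ξ, H⟫ ⊆ ℤ`, then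
`ξ ∈ ℤ^F` and `h = ∑ ξ_g g ∈ G` satisfies `⟪h, Γ⟫ ⊆ ℤ`; since `Γ` contains `d ℤⁿ` for some
`d ≠ 0`, `d h ∈ G ∩ ℤⁿ = {0}`, so `⟪ξ, L x⟫ = ⟪h, x⟫ = 0`.
-/

def intPoints (n : ℕ) : Set (EuclideanSpace ℝ (Fin n)) :=
  {x | ∀ i, ∃ k : ℤ, x i = (k : ℝ)}

def IsFullLattice {n : ℕ} (L : AddSubgroup (EuclideanSpace ℝ (Fin n))) : Prop :=
  ∃ b : Module.Basis (Fin n) ℝ (EuclideanSpace ℝ (Fin n)),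
    L = AddSubgroup.closure (Set.range b)

def approxDual {n : ℕ} (S : Set (EuclideanSpace ℝ (Fin n))) (ε : ℝ) :
    Set (EuclideanSpace ℝ (Fin n)) :=
  {x | ∀ g ∈ S, ∃ k : ℤ, |(inner ℝ x g : ℝ) - (k : ℝ)| ≤ ε}

open Filter Topology Submodule RealInnerProductSpace

def AddSubgroup.lineSubspace {E : Type*} [AddCommGroup E] [Module ℝ E] (H : AddSubgroup E) :
    Submodule ℝ E where
  carrier := {v | ∀ t : ℝ, t • v ∈ H}
  add_mem' hv hw t := by simpa only [smul_add] using H.add_mem (hv t) (hw t)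
  zero_mem' t := by simpa only [smul_zero] using H.zero_mem
  smul_mem' c v hv t := by simpa only [smul_smul] using hv (t * c)

theorem AddSubgroup.lineSubspace_subset {E : Type*} [AddCommGroup E] [Module ℝ E]
    (H : AddSubgroup E) : (H.lineSubspace : Set E) ⊆ H :=
  fun v hv => one_smul ℝ v ▸ hv 1

theorem tendsto_floor_div_mul (t : ℝ) {r : ℕ → ℝ} (hr₀ : ∀ k, 0 < r k)
    (hr : Tendsto r atTop (𝓝 0)) : Tendsto (fun k => (⌊t / r k⌋ : ℝ) * r k) atTop (𝓝 t) := by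
  have hbound : ∀ k, ‖(⌊t / r k⌋ : ℝ) * r k - t‖ ≤ r k := fun k => by
    have hfract : t - ⌊t / r k⌋ * r k = Int.fract (t / r k) * r k := by
      rw [← Int.self_sub_floor, sub_mul, div_mul_cancel₀ _ (hr₀ k).ne']
    rw [Real.norm_eq_abs, abs_sub_comm, hfract,
      abs_of_nonneg (mul_nonneg (Int.fract_nonneg _) (hr₀ k).le)]
    exact mul_le_of_le_one_left (hr₀ k).le (Int.fract_lt_one _).le
  exact tendsto_iff_norm_sub_tendsto_zero.2 (squeeze_zero (fun _ => norm_nonneg _) hbound hr)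

theorem AddSubgroup.mem_lineSubspace_of_tendsto {E : Type*} [NormedAddCommGroup E]
    [NormedSpace ℝ E] {H : AddSubgroup E} (hH : IsClosed (H : Set E)) {r : ℕ → ℝ} {u : ℕ → E}
    {u₀ : E} (hr₀ : ∀ k, 0 < r k) (hr : Tendsto r atTop (𝓝 0)) (hu : Tendsto u atTop (𝓝 u₀))
    (hmem : ∀ k, r k • u k ∈ H) : u₀ ∈ H.lineSubspace := fun t => by
  refine hH.mem_of_tendsto ((tendsto_floor_div_mul t hr₀ hr).smul hu) (Eventually.of_forall ?_)
  intro k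
  rw [← smul_smul, Int.cast_smul_eq_zsmul]
  exact H.zsmul_mem (hmem k) _

namespace AddSubgroup

variable {E : Type*} [NormedAddCommGroup E] [InnerProductSpace ℝ E] [FiniteDimensional ℝ E]
  {H : AddSubgroup E}

theorem exists_norm_lt_imp_eq_zero_of_orthogonal_lineSubspace (hH : IsClosed (H : Set E)) :
    ∃ δ > 0, ∀ y ∈ H, y ∈ H.lineSubspaceᗮ → ‖y‖ < δ → y = 0 := by
  by_contra! hsmall
  choose y hyH hyV hylt hy₀ using fun k : ℕ => hsmall (1 / (k + 1)) Nat.one_div_pos_of_nat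
  have hnorm : ∀ k, 0 < ‖y k‖ := fun k => norm_pos_iff.2 (hy₀ k)
  have hsphere : ∀ k, ‖y k‖⁻¹ • y k ∈ Metric.sphere (0 : E) 1 := fun k => by
    simp [norm_smul, (hnorm k).ne']
  obtain ⟨u₀, hu₀, φ, hφ, hu⟩ := (isCompact_sphere (0 : E) 1).tendsto_subseq hsphere
  have hr : Tendsto (fun k => ‖y (φ k)‖) atTop (𝓝 0) :=
    squeeze_zero (fun _ => norm_nonneg _) (fun k => (hylt (φ k)).le)
      (tendsto_one_div_add_atTop_nhds_zero_nat.comp hφ.tendsto_atTop)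
  have hline : u₀ ∈ H.lineSubspace :=
    mem_lineSubspace_of_tendsto hH (fun k => hnorm (φ k)) hr hu fun k => by
      simpa [smul_smul, (hnorm (φ k)).ne'] using hyH (φ k)
  have hperp : u₀ ∈ H.lineSubspaceᗮ :=
    H.lineSubspaceᗮ.closed_of_finiteDimensional.mem_of_tendsto hu
      (Eventually.of_forall fun k => H.lineSubspaceᗮ.smul_mem _ (hyV (φ k)))
  have : u₀ = 0 := (orthogonal_disjoint _).le_bot ⟨hline, hperp⟩
  simp [this] at hu₀

theorem discreteTopology_inf_orthogonal_lineSubspace (hH : IsClosed (H : Set E)) :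
    DiscreteTopology ↥(H ⊓ H.lineSubspaceᗮ.toAddSubgroup) := by
  obtain ⟨δ, hδ, hgap⟩ := exists_norm_lt_imp_eq_zero_of_orthogonal_lineSubspace hH
  refine discreteTopology_iff_isOpen_singleton_zero.2 ⟨Metric.ball 0 δ, Metric.isOpen_ball, ?_⟩
  ext ⟨y, hyH, hyV⟩
  simp only [Set.mem_preimage, Metric.mem_ball, dist_zero_right, Set.mem_singleton_iff]
  constructor
  · intro hy
    exact Subtype.ext (hgap y hyH hyV hy)
  · rintro ⟨⟩
    simpa using hδ

theorem sub_starProjection_lineSubspace_mem {h : E} (hh : h ∈ H) :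
    h - H.lineSubspace.starProjection h ∈ H ⊓ H.lineSubspaceᗮ.toAddSubgroup :=
  ⟨H.sub_mem hh (H.lineSubspace_subset (H.lineSubspace.starProjection_apply_mem h)),
    H.lineSubspace.sub_starProjection_mem_orthogonal h⟩

end AddSubgroup

theorem Submodule.linearIndependent_real_of_discreteTopology {E : Type*} [NormedAddCommGroup E]
    [NormedSpace ℝ E] [FiniteDimensional ℝ E] (L : Submodule ℤ E) [DiscreteTopology L]
    {ι : Type*} [Fintype ι] (b : Module.Basis ι ℤ L) :
    LinearIndependent ℝ (fun i => (b i : E)) := by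
  have hspan : span ℤ (Set.range fun i => (b i : E)) = L := by
    rw [show (fun i => (b i : E)) = L.subtype ∘ b from rfl, Set.range_comp, ← map_span,
      b.span_eq, map_subtype_top]
  have hdisc : DiscreteTopology (span ℤ (Set.range fun i => (b i : E))) := by
    rw [hspan]; infer_instance
  rw [linearIndependent_iff_card_eq_finrank_span, Real.finrank_eq_int_finrank_of_discrete hdisc,
    ← linearIndependent_iff_card_eq_finrank_span]
  exact b.linearIndependent.map' L.subtype (ker_subtype L)

theorem LinearIndependent.exists_inner_sum_smul_eq {E : Type*} [NormedAddCommGroup E]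
    [InnerProductSpace ℝ E] {ι : Type*} [Fintype ι] {u : ι → E} (hu : LinearIndependent ℝ u) :
    ∃ ξ : ι → E, (∀ i, ξ i ∈ span ℝ (Set.range u)) ∧
      ∀ i (c : ι → ℝ), ⟪ξ i, ∑ j, c j • u j⟫ = c i := by
  let b := Module.Basis.span hu
  have := b.finiteDimensional_of_finite
  refine ⟨fun i => ((InnerProductSpace.toDual ℝ _).symm (b.coord i).toContinuousLinearMap : _),
    fun i => Subtype.prop _, fun i c => ?_⟩
  have hsum : ∑ j, c j • u j = ((∑ j, c j • b j : span ℝ (Set.range u)) : E) := by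
    simp [b, Module.Basis.span_apply]
  rw [hsum, ← coe_inner, InnerProductSpace.toDual_symm_apply,
    LinearMap.coe_toContinuousLinearMap', b.coord_apply, b.repr_sum_self]

theorem Module.Basis.coe_eq_sum_intCast_repr_smul {E : Type*} [AddCommGroup E] [Module ℝ E]
    {L : Submodule ℤ E} {ι : Type*} [Fintype ι] (b : Module.Basis ι ℤ L) (l : L) :
    (l : E) = ∑ j, (b.repr l j : ℝ) • (b j : E) := by
  conv_lhs => rw [← b.sum_repr l]
  simp only [coe_sum, coe_smul_of_tower, Int.cast_smul_eq_zsmul]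

def integralDual {E : Type*} [NormedAddCommGroup E] [InnerProductSpace ℝ E] (S : Set E) : Set E :=
  {ξ | ∀ s ∈ S, ∃ k : ℤ, ⟪ξ, s⟫ = k}

theorem eq_zero_of_forall_mul_eq_intCast {a : ℝ} (h : ∀ t : ℝ, ∃ k : ℤ, t * a = k) : a = 0 := by
  by_contra ha
  obtain ⟨k, hk⟩ := h (2 * a)⁻¹
  have : (2 * k : ℝ) = 1 := by
    rw [← hk]
    field_simp
  norm_cast at this
  omega

section IntegralDual

variable {E : Type*} [NormedAddCommGroup E] [InnerProductSpace ℝ E]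

theorem integralDual_integralDual_subset_of_subset {S : Set E} (K : Submodule ℝ E)
    [K.HasOrthogonalProjection] (hSK : S ⊆ K) : integralDual (integralDual S) ⊆ K := by
  intro x hx
  set r := x - K.starProjection x
  have hr : r ∈ Kᗮ := K.sub_starProjection_mem_orthogonal x
  have hxr : ⟪r, x⟫ = 0 := by
    refine eq_zero_of_forall_mul_eq_intCast fun t => ?_
    obtain ⟨k, hk⟩ := hx (t • r) fun s hs =>
      ⟨0, by rw [real_inner_smul_left, inner_left_of_mem_orthogonal (hSK hs) hr]; simp⟩
    exact ⟨k, by rw [← real_inner_smul_left, real_inner_comm, hk]⟩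
  have : r = 0 := by
    rwa [← inner_self_eq_zero (𝕜 := ℝ), inner_sub_right,
      inner_left_of_mem_orthogonal (K.starProjection_apply_mem x) hr, sub_zero]
  rw [sub_eq_zero.1 this]
  exact K.starProjection_apply_mem x

variable [FiniteDimensional ℝ E]

theorem AddSubgroup.integralDual_integralDual_subset (H : AddSubgroup E)
    (hH : IsClosed (H : Set E)) : integralDual (integralDual (H : Set E)) ⊆ H := by
  set V := H.lineSubspace
  let Λ : Submodule ℤ E := (H ⊓ Vᗮ.toAddSubgroup).toIntSubmodule
  have : DiscreteTopology Λ := H.discreteTopology_inf_orthogonal_lineSubspace hH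
  let b := Module.Free.chooseBasis ℤ Λ
  set u := fun i => (b i : E)
  -- `H = V + Λ` with `Λ` discrete; `ξ` is a dual basis of the `ℤ`-basis `u` of `Λ`, inside `Vᗮ`.
  obtain ⟨ξ, hξU, hξu⟩ := (Λ.linearIndependent_real_of_discreteTopology b).exists_inner_sum_smul_eq
  have huH : ∀ i, u i ∈ H := fun i => (b i).2.1
  have hξV : ∀ i, ξ i ∈ Vᗮ := fun i =>
    span_le.2 (Set.range_subset_iff.2 fun j => (b j).2.2) (hξU i)
  have hξΛ : ∀ i (l : Λ), ∃ k : ℤ, ⟪ξ i, l⟫ = k := fun i l =>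
    ⟨b.repr l i, by rw [b.coe_eq_sum_intCast_repr_smul, hξu]⟩
  have hξH : ∀ i, ξ i ∈ integralDual (H : Set E) := fun i h hh => by
    rw [← sub_add_cancel h (V.starProjection h), inner_add_right,
      inner_left_of_mem_orthogonal (V.starProjection_apply_mem h) (hξV i), add_zero]
    exact hξΛ i ⟨_, H.sub_starProjection_lineSubspace_mem hh⟩
  have hHVU : (H : Set E) ⊆ (V ⊔ span ℝ (Set.range u) : Submodule ℝ E) := fun h hh => by
    rw [SetLike.mem_coe, ← add_sub_cancel (V.starProjection h) h]
    refine add_mem (Submodule.mem_sup_left (V.starProjection_apply_mem h))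
      (Submodule.mem_sup_right ?_)
    rw [show h - V.starProjection h = (⟨_, H.sub_starProjection_lineSubspace_mem hh⟩ : Λ) from rfl,
      b.coe_eq_sum_intCast_repr_smul]
    exact sum_mem fun j _ => smul_mem _ _ (subset_span ⟨j, rfl⟩)
  intro x hx
  obtain ⟨v, hv, w, hw, rfl⟩ :=
    Submodule.mem_sup.1 (integralDual_integralDual_subset_of_subset _ hHVU hx)
  obtain ⟨c, rfl⟩ := (mem_span_range_iff_exists_fun ℝ).1 hw
  have hc : ∀ i, ∃ k : ℤ, c i = k := fun i => by
    obtain ⟨k, hk⟩ := hx (ξ i) (hξH i)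
    refine ⟨k, ?_⟩
    rw [← hξu i c, ← hk, real_inner_comm (ξ i), inner_add_right,
      inner_left_of_mem_orthogonal hv (hξV i), zero_add]
  choose k hk using hc
  refine H.add_mem (H.lineSubspace_subset hv) (H.sum_mem fun i _ => ?_)
  rw [hk, Int.cast_smul_eq_zsmul]
  exact H.zsmul_mem (huH i) _

end IntegralDual

def intLattice (ι : Type*) : AddSubgroup (EuclideanSpace ℝ ι) where
  carrier := {x | ∀ i, ∃ k : ℤ, x i = k}
  add_mem' {x y} hx hy i := by
    obtain ⟨k, hk⟩ := hx i
    obtain ⟨l, hl⟩ := hy i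
    exact ⟨k + l, by simp [hk, hl]⟩
  zero_mem' _ := ⟨0, by simp⟩
  neg_mem' {x} hx i := by
    obtain ⟨k, hk⟩ := hx i
    exact ⟨-k, by simp [hk]⟩

theorem exists_mem_forall_abs_inner_sub_intCast_le {E : Type*} [NormedAddCommGroup E]
    [InnerProductSpace ℝ E] {ι : Type*} [Fintype ι] (g : ι → E) (Γ : AddSubgroup E)
    (hg : ∀ m : ι → ℤ, ∑ i, m i • g i ∈ integralDual (Γ : Set E) → ∑ i, m i • g i = 0)
    (x : E) {ε : ℝ} (hε : 0 < ε) :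
    ∃ γ ∈ Γ, ∀ i, ∃ k : ℤ, |⟪x - γ, g i⟫ - k| ≤ ε := by
  classical
  let L : E →+ EuclideanSpace ℝ ι :=
    { toFun y := WithLp.toLp 2 fun i => ⟪g i, y⟫
      map_zero' := by ext; simp
      map_add' y z := by ext; simp [inner_add_right] }
  have hL : ∀ (ξ : EuclideanSpace ℝ ι) y, ⟪ξ, L y⟫ = ⟪∑ i, ξ i • g i, y⟫ := fun ξ y => by
    simp [L, PiLp.inner_apply, sum_inner, real_inner_smul_left, mul_comm]
  let H := (intLattice ι ⊔ Γ.map L).topologicalClosure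
  have hLx : L x ∈ H := by
    refine H.integralDual_integralDual_subset (AddSubgroup.isClosed_topologicalClosure _)
      fun ξ hξ => ?_
    have hξZ : ∀ i, ∃ k : ℤ, ξ i = k := fun i => by
      have hsingle : EuclideanSpace.single i (1 : ℝ) ∈ intLattice ι := fun j =>
        ⟨if j = i then 1 else 0, by simp [PiLp.single_apply, apply_ite]⟩
      simpa [EuclideanSpace.inner_single_right] using
        hξ _ (AddSubgroup.le_topologicalClosure _ (AddSubgroup.mem_sup_left hsingle))
    choose m hm using hξZ
    have hsum : ∑ i, ξ i • g i = ∑ i, m i • g i := by simp [hm, Int.cast_smul_eq_zsmul]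
    have hzero : ∑ i, m i • g i = 0 := hg m fun γ hγ => by
      rw [← hsum, ← hL]
      exact hξ _ (AddSubgroup.le_topologicalClosure _
        (AddSubgroup.mem_sup_right (AddSubgroup.mem_map_of_mem L hγ)))
    exact ⟨0, by rw [real_inner_comm, hL, hsum, hzero, inner_zero_left, Int.cast_zero]⟩
  obtain ⟨z, hzJ, hz⟩ := Metric.mem_closure_iff.1 hLx ε hε
  obtain ⟨a, ha, _, ⟨γ, hγ, rfl⟩, rfl⟩ := AddSubgroup.mem_sup.1 hzJ
  refine ⟨γ, hγ, fun i => ?_⟩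
  obtain ⟨k, hk⟩ := ha i
  refine ⟨k, ?_⟩
  have hcoord : ⟪x - γ, g i⟫ - k = (L x - (a + L γ)) i := by
    simp [L, hk, inner_sub_left, real_inner_comm]
    ring
  rw [hcoord, ← Real.norm_eq_abs]
  exact (PiLp.norm_apply_le _ i).trans ((dist_eq_norm _ _).symm.trans_le hz.le)

theorem IsFullLattice.exists_intCast_smul_single_mem {n : ℕ}
    {Γ : AddSubgroup (EuclideanSpace ℝ (Fin n))} (hΓ : IsFullLattice Γ)
    (hΓsub : (Γ : Set _) ⊆ intPoints n) :
    ∃ d : ℤ, d ≠ 0 ∧ ∀ i, (d : ℝ) • EuclideanSpace.single i (1 : ℝ) ∈ Γ := by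
  obtain ⟨b, rfl⟩ := hΓ
  have hb : ∀ j, b j ∈ AddSubgroup.closure (Set.range b) :=
    fun j => AddSubgroup.subset_closure ⟨j, rfl⟩
  choose M hM using fun i j => hΓsub (hb j) i
  let A : Matrix (Fin n) (Fin n) ℤ := Matrix.of M
  have hdet : A.det ≠ 0 := by
    have hA : A.map (Int.cast : ℤ → ℝ) = (PiLp.basisFun 2 ℝ (Fin n)).toMatrix b := by
      ext i j
      simp [A, Module.Basis.toMatrix_apply, hM]
    have hunit := (PiLp.basisFun 2 ℝ (Fin n)).isUnit_det b
    rw [Module.Basis.det_apply, ← hA] at hunit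
    have hcast : ((A.det : ℤ) : ℝ) = (A.map Int.cast).det := RingHom.map_det (Int.castRingHom ℝ) A
    exact_mod_cast hcast ▸ hunit.ne_zero
  refine ⟨A.det, hdet, fun i => ?_⟩
  have hcomb : (A.det : ℝ) • EuclideanSpace.single i (1 : ℝ) =
      ∑ j, (A.adjugate j i : ℝ) • b j := by
    ext l
    have hentry := congrArg (fun B : Matrix (Fin n) (Fin n) ℤ => (B l i : ℝ)) A.mul_adjugate
    simp only [Matrix.mul_apply, Matrix.smul_apply, Matrix.one_apply, smul_eq_mul, mul_ite,
      mul_one, mul_zero, Int.cast_sum, Int.cast_mul, Int.cast_ite, Int.cast_zero] at hentry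
    simp only [PiLp.smul_apply, PiLp.single_apply, smul_eq_mul, mul_ite, mul_one, mul_zero,
      WithLp.ofLp_sum, Finset.sum_apply, hM, ← hentry]
    exact Finset.sum_congr rfl fun j _ => mul_comm _ _
  rw [hcomb]
  exact AddSubgroup.sum_mem _ fun j _ => by
    rw [Int.cast_smul_eq_zsmul]
    exact AddSubgroup.zsmul_mem _ (hb j) _

theorem eq_zero_of_mem_integralDual {n : ℕ} {G Γ : AddSubgroup (EuclideanSpace ℝ (Fin n))}
    (hint : (G : Set _) ∩ intPoints n = {0}) (hΓsub : (Γ : Set _) ⊆ intPoints n)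
    (hΓ : IsFullLattice Γ) {h : EuclideanSpace ℝ (Fin n)} (hG : h ∈ G)
    (hΓh : h ∈ integralDual (Γ : Set _)) : h = 0 := by
  obtain ⟨d, hd, hdΓ⟩ := hΓ.exists_intCast_smul_single_mem hΓsub
  have hdh : (d : ℝ) • h ∈ (G : Set _) ∩ intPoints n := by
    refine ⟨by rw [Int.cast_smul_eq_zsmul]; exact G.zsmul_mem hG d, fun i => ?_⟩
    obtain ⟨k, hk⟩ := hΓh _ (hdΓ i)
    refine ⟨k, ?_⟩
    rw [← hk, real_inner_smul_right, EuclideanSpace.inner_single_right]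
    simp
  rw [hint, Set.mem_singleton_iff, smul_eq_zero] at hdh
  exact hdh.resolve_left (by exact_mod_cast hd)

theorem stmt5_general {n : ℕ} (G : AddSubgroup (EuclideanSpace ℝ (Fin n)))
    (hint : (G : Set _) ∩ intPoints n = {0})
    (F : Set (EuclideanSpace ℝ (Fin n))) (hF : F.Finite) (hFG : F ⊆ G)
    (ε : ℝ) (hε : 0 < ε)
    (Γ : AddSubgroup (EuclideanSpace ℝ (Fin n)))
    (hΓsub : (Γ : Set _) ⊆ intPoints n) (hΓ : IsFullLattice Γ) :
    ∀ x : EuclideanSpace ℝ (Fin n), ∃ y ∈ approxDual F ε, ∃ γ ∈ Γ, x = y + γ := by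
  intro x
  have := hF.fintype
  obtain ⟨γ, hγ, hclose⟩ := exists_mem_forall_abs_inner_sub_intCast_le (Subtype.val : F → _) Γ
    (fun m hm => eq_zero_of_mem_integralDual hint hΓsub hΓ
      (G.sum_mem fun g _ => G.zsmul_mem (hFG g.2) _) hm) x hε
  exact ⟨x - γ, fun g hg => hclose ⟨g, hg⟩, γ, hγ, (sub_add_cancel x γ).symm⟩

/-- if `G` is finitely generated with `G ∩ ℤⁿ = {0}`, then for any
finite `F ⊆ G`, `ε > 0` and full rank sublattice `Γ ⊆ ℤⁿ`, one has `F^{*,ε} + Γ = ℝⁿ`. -/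
theorem stmt5 {n : ℕ} (G : AddSubgroup (EuclideanSpace ℝ (Fin n)))
    (hfg : G.FG) (hint : (G : Set _) ∩ intPoints n = {0})
    (F : Set (EuclideanSpace ℝ (Fin n))) (hF : F.Finite) (hFG : F ⊆ G)
    (ε : ℝ) (hε : 0 < ε)
    (Γ : AddSubgroup (EuclideanSpace ℝ (Fin n)))
    (hΓsub : (Γ : Set _) ⊆ intPoints n) (hΓ : IsFullLattice Γ) :
    ∀ x : EuclideanSpace ℝ (Fin n), ∃ y ∈ approxDual F ε, ∃ γ ∈ Γ, x = y + γ :=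
  stmt5_general G hint F hF hFG ε hε Γ hΓsub hΓ
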